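/- Let u_0 ∈ Λ_0^{(1,…,1)} satisfy 0 < u_0 < w_0 − v_0 pointwise and u_0 + v_0 a solution of (EL), and for each sufficiently large k let u_k ∈ Λ_0^{p(k)} (p(k) = (k,1,…,1)) satisfy 0 ≤ u_k ≤ w_0 − v_0, u_k + v_0 a solution of (EL), and u_k intersects u_0 (there exist i, j with (u_k(i) − u_0(i))·(u_k(j) − u_0(j)) < 0). Then there exist integers j_k ∈ ℤ and a subsequence along which the translates (τ^1_{−j_k} u_k)(i) := u_k(i + j_k e_1) converge pointwise to a function U : ℤ^n → ℝ such that 0 ≤ U ≤ w_0 − v_0, U is 1-periodic in the directions e_2,…,e_n, U(0) ≥ u_0(0), and U + v_0 is a solution of (EL). -/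

import Mathlib

open Filter Topology

namespace FK

noncomputable section

abbrev Zn (n : ℕ) := Fin n → ℤ

variable {n : ℕ}

/-- the ℓ¹ norm `‖i‖ = ∑ |i_j|` on `ℤⁿ` -/
def znorm (i : Zn n) : ℕ := ∑ j, (i j).natAbs

/-- the finite ball `{j : ‖j - i‖ ≤ r}` as a `Finset` -/
def ball (r : ℕ) (i : Zn n) : Finset (Zn n) :=
  (Finset.Icc (fun m => i m - (r : ℤ)) (fun m => i m + (r : ℤ))).filter fun j => znorm (j - i) ≤ r

/-- the shift `(shift j u) i = u (i + j)`, i.e. `τ_{-jₙ}ⁿ ⋯ τ_{-j₁}¹ u` -/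
def shift (j : Zn n) (u : Zn n → ℝ) : Zn n → ℝ := fun i => u (i + j)

/-- the local potential `S_j(u) = s(τ_{-j} u)` -/
def Spot (s : (Zn n → ℝ) → ℝ) (j : Zn n) (u : Zn n → ℝ) : ℝ := s (shift j u)

/-- partial derivative `∂_i F(u)` of a functional `F` with respect to the coordinate `u(i)` -/
def pd (F : (Zn n → ℝ) → ℝ) (i : Zn n) (u : Zn n → ℝ) : ℝ :=
  deriv (fun t => F (Function.update u i t)) (u i)

/-- second partial derivative `∂_{i,k} F(u)` -/
def pd2 (F : (Zn n → ℝ) → ℝ) (i k : Zn n) (u : Zn n → ℝ) : ℝ :=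
  pd (fun w => pd F k w) i u

/-- the gradient field `W(u)(i) = ∑_{j : ‖j-i‖ ≤ r} ∂_i S_j(u)` -/
def grad (r : ℕ) (s : (Zn n → ℝ) → ℝ) (u : Zn n → ℝ) : Zn n → ℝ :=
  fun i => ∑ j ∈ ball r i, pd (Spot s j) i u

/-- `u` is a solution of the Euler–Lagrange equation (EL):
`∑_{j : ‖j-i‖ ≤ r} ∂_i S_j(u) = 0` for all `i` -/
def IsSolution (r : ℕ) (s : (Zn n → ℝ) → ℝ) (u : Zn n → ℝ) : Prop :=
  ∀ i, grad r s u i = 0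

/-- the standard basis vector `e_m` -/
def unitv (m : Fin n) : Zn n := fun m' => if m' = m then 1 else 0

/-- the first standard basis vector `e₁` -/
def e1v : Zn n := fun m => if (m : ℕ) = 0 then 1 else 0

/-- `u` has period `p m` in the `m`-th coordinate direction, for every `m` -/
def Periodic (p : Fin n → ℕ) (u : Zn n → ℝ) : Prop :=
  ∀ (i : Zn n) (m : Fin n), u (i + (p m : ℤ) • unitv m) = u i

/-- `u` is `1`-periodic in every coordinate direction -/
def PeriodicAll (u : Zn n → ℝ) : Prop := Periodic (fun _ => 1) u

/-- `J_0(u) = S_0(u)` -/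
def J0 (s : (Zn n → ℝ) → ℝ) (u : Zn n → ℝ) : ℝ := Spot s 0 u

/-- `c_0 = inf J_0` over fully periodic configurations -/
def c0 (s : (Zn n → ℝ) → ℝ) : ℝ := sInf {y | ∃ u, PeriodicAll u ∧ J0 s u = y}

/-- `M_0`, the set of fully periodic minimizers of `J_0` -/
def M0 (s : (Zn n → ℝ) → ℝ) : Set (Zn n → ℝ) := {u | PeriodicAll u ∧ J0 s u = c0 s}

/-- the fundamental domain `T_0^p = ∏_j {0, …, p_j - 1}` -/
def Tbox (p : Fin n → ℕ) : Finset (Zn n) :=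
  Finset.Icc 0 fun m => (p m : ℤ) - 1

/-- `J_0^p(u) = ∑_{j ∈ T_0^p} S_j(u)` -/
def J0p (s : (Zn n → ℝ) → ℝ) (p : Fin n → ℕ) (u : Zn n → ℝ) : ℝ :=
  ∑ j ∈ Tbox p, Spot s j u

/-- `c_0^p = inf J_0^p` over `Λ_0^p` -/
def c0p (s : (Zn n → ℝ) → ℝ) (p : Fin n → ℕ) : ℝ :=
  sInf {y | ∃ u, Periodic p u ∧ J0p s p u = y}

/-- `I_0^p(u) = J_0^p(u + v_0)` -/
def I0p (s : (Zn n → ℝ) → ℝ) (p : Fin n → ℕ) (v0 u : Zn n → ℝ) : ℝ :=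
  J0p s p (u + v0)

/-- the norm `‖u‖_{Λ_0^p} = (∑_{j ∈ T_0^p} |u(j)|²)^{1/2}` -/
def lamNorm (p : Fin n → ℕ) (u : Zn n → ℝ) : ℝ :=
  Real.sqrt (∑ j ∈ Tbox p, (u j) ^ 2)

/-- `G_0^p = {u ∈ Λ_0^p : 0 ≤ u ≤ w_0 - v_0}` -/
def G0 (p : Fin n → ℕ) (v0 w0 : Zn n → ℝ) : Set (Zn n → ℝ) :=
  {u | Periodic p u ∧ 0 ≤ u ∧ u ≤ w0 - v0}

/-- the isometric identification of `Λ_0^p` with the euclidean space `ℝ^{T_0^p}` -/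
def toEuc (p : Fin n → ℕ) (u : Zn n → ℝ) : EuclideanSpace ℝ (Tbox (n := n) p) :=
  WithLp.toLp 2 fun j => u j.1

/-- inverse of `toEuc`: extend values on `T_0^p` `p`-periodically -/
def extendP (p : Fin n → ℕ) (x : EuclideanSpace ℝ (Tbox (n := n) p)) : Zn n → ℝ :=
  fun i => if h : (fun m => i m % (p m : ℤ)) ∈ Tbox p then x ⟨_, h⟩ else 0

/-- `I_0^p` read through the identification of `Λ_0^p` with euclidean space -/
def I0euc (s : (Zn n → ℝ) → ℝ) (p : Fin n → ℕ) (v0 : Zn n → ℝ) :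
    EuclideanSpace ℝ (Tbox (n := n) p) → ℝ :=
  fun x => I0p s p v0 (extendP p x)

/-- `(I_0^p)'(u) = 0`: vanishing of the Fréchet derivative of `I_0^p` at `u`, computed through
the isometric identification of `Λ_0^p` with euclidean space -/
def IsCrit0 (s : (Zn n → ℝ) → ℝ) (p : Fin n → ℕ) (v0 : Zn n → ℝ) (u : Zn n → ℝ) : Prop :=
  fderiv ℝ (I0euc s p v0) (toEuc p u) = 0

/-- membership in `H_0^p`: a norm-continuous path in `G_0^p` from `0` to `w_0 - v_0` -/
def PathIn (p : Fin n → ℕ) (v0 w0 : Zn n → ℝ) (h : ℝ → Zn n → ℝ) : Prop :=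
  ContinuousOn (fun θ => toEuc p (h θ)) (Set.Icc 0 1) ∧
  (∀ θ ∈ Set.Icc (0 : ℝ) 1, h θ ∈ G0 p v0 w0) ∧
  h 0 = 0 ∧ h 1 = w0 - v0

/-- the mountain pass level `d_0^p = inf_{h ∈ H_0^p} max_{θ ∈ [0,1]} I_0^p(h(θ))` -/
def d0p (s : (Zn n → ℝ) → ℝ) (p : Fin n → ℕ) (v0 w0 : Zn n → ℝ) : ℝ :=
  sInf {y | ∃ h, PathIn p v0 w0 h ∧
    y = sSup ((fun θ => I0p s p v0 (h θ)) '' Set.Icc 0 1)}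

/-- `Φ` is the (negative gradient) semiflow of `I_0^p` on `Λ_0^p`:
`-∂_t Φ_t(u)(i) = ∑_{j : ‖j-i‖ ≤ r} ∂_i S_j(Φ_t(u) + v_0)`, `Φ_0(u) = u` -/
def IsFlow (r : ℕ) (s : (Zn n → ℝ) → ℝ) (p : Fin n → ℕ) (v0 : Zn n → ℝ)
    (Φ : ℝ → (Zn n → ℝ) → (Zn n → ℝ)) : Prop :=
  (∀ u, Periodic p u → ∀ t, Periodic p (Φ t u)) ∧
  (∀ u, Φ 0 u = u) ∧
  (∀ u, Periodic p u → ∀ i, ∀ t ∈ Set.Ici (0 : ℝ),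
    HasDerivWithinAt (fun τ => Φ τ u i) (-(grad r s (Φ t u + v0) i)) (Set.Ici 0) t)

/-- `p(k) = (k, 1, …, 1)` -/
def pk (n k : ℕ) : Fin n → ℕ := fun m => if (m : ℕ) = 0 then k else 1

/-- `u` touches `v` from below -/
def TouchesBelow (u v : Zn n → ℝ) : Prop := u ≤ v ∧ u ≠ v ∧ ∃ i, u i = v i

/-- `θ̲_t = sup {θ ∈ [0,1] : Φ_t(h(θ)) ≤ u₀, Φ_t(h(θ)) ≠ u₀}` -/
def thetaLow (Φ : ℝ → (Zn n → ℝ) → (Zn n → ℝ)) (h : ℝ → Zn n → ℝ) (u0 : Zn n → ℝ)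
    (t : ℝ) : ℝ :=
  sSup {θ | θ ∈ Set.Icc (0 : ℝ) 1 ∧ Φ t (h θ) ≤ u0 ∧ Φ t (h θ) ≠ u0}

/-- `θ̄_t = inf {θ ∈ [0,1] : Φ_t(h(θ)) ≥ u₀, Φ_t(h(θ)) ≠ u₀}` -/
def thetaHigh (Φ : ℝ → (Zn n → ℝ) → (Zn n → ℝ)) (h : ℝ → Zn n → ℝ) (u0 : Zn n → ℝ)
    (t : ℝ) : ℝ :=
  sInf {θ | θ ∈ Set.Icc (0 : ℝ) 1 ∧ u0 ≤ Φ t (h θ) ∧ Φ t (h θ) ≠ u0}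

/-- `s` read through the identification of `ℝ^{B_0^r}` with euclidean space (used to state that
`s ∈ C²(ℝ^{B_0^r}, ℝ)`) -/
def sEuc (r : ℕ) (s : (Zn n → ℝ) → ℝ) : EuclideanSpace ℝ (ball r (0 : Zn n)) → ℝ :=
  fun x => s fun i => if h : i ∈ ball r (0 : Zn n) then x ⟨i, h⟩ else 0

/-- The standing assumptions on the generalized Frenkel–Kontorova model: `s ∈ C²(ℝ^{B_0^r}, ℝ)`
(encoded by `localized` and `smooth`) satisfying (S1)–(S4). -/
structure Setup (n r : ℕ) : Type where
  /-- the local potential -/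
  s : (Zn n → ℝ) → ℝ
  npos : 0 < n
  /-- `s` only depends on the coordinates in `B_0^r` -/
  localized : ∀ u v : Zn n → ℝ, (∀ k, znorm k ≤ r → u k = v k) → s u = s v
  /-- `s` is `C²` -/
  smooth : ContDiff ℝ 2 (sEuc r s)
  /-- (S1): periodicity -/
  S1 : ∀ u : Zn n → ℝ, s (fun i => u i + 1) = s u
  /-- (S2): bounded below -/
  S2_bddBelow : ∃ b : ℝ, ∀ u, b ≤ s u
  /-- (S2): coercivity -/
  S2_coercive : ∀ k j : Zn n, znorm k ≤ r → znorm j ≤ r → znorm (k - j) = 1 →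
    ∀ M : ℝ, ∃ R : ℝ, ∀ u : Zn n → ℝ, R ≤ |u k - u j| → M ≤ s u
  /-- (S3): off-diagonal second partials nonpositive -/
  S3 : ∀ k j : Zn n, znorm k ≤ r → znorm j ≤ r → k ≠ j → ∀ u, pd2 s k j u ≤ 0
  /-- (S3): strict negativity for nearest neighbours of `0` -/
  S3' : ∀ j : Zn n, znorm j = 1 → ∀ u, pd2 s 0 j u < 0
  /-- the constant of (S4) -/
  C : ℝ
  /-- (S4): uniformly bounded second partials -/
  S4 : ∀ i k : Zn n, znorm i ≤ r → znorm k ≤ r → ∀ u, |pd2 s i k u| ≤ C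

/-- 1-periodicity in the directions `e_2, …, e_n` with periods `q` -/
def Periodic1 (q : Fin n → ℕ) (u : Zn n → ℝ) : Prop :=
  ∀ (i : Zn n) (m : Fin n), 1 ≤ (m : ℕ) → u (i + (q m : ℤ) • unitv m) = u i

/-- the slab `{i} × T_1^q` as a `Finset` -/
def slab (q : Fin n → ℕ) (i : ℤ) : Finset (Zn n) :=
  Finset.Icc (fun m => if (m : ℕ) = 0 then i else 0)
    (fun m => if (m : ℕ) = 0 then i else (q m : ℤ) - 1)

/-- membership in `Λ_1^q` -/
def MemLam1 (q : Fin n → ℕ) (u : Zn n → ℝ) : Prop :=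
  Periodic1 q u ∧ Summable fun i : ℤ => ∑ j ∈ slab q i, |u j|

/-- the norm `‖u‖_{Λ_1^q} = ∑_{ℤ × T_1^q} |u(j)| + (∑_{ℤ × T_1^q} |u(j)|²)^{1/2}` -/
def lamNorm1 (q : Fin n → ℕ) (u : Zn n → ℝ) : ℝ :=
  (∑' i : ℤ, ∑ j ∈ slab q i, |u j|) + Real.sqrt (∑' i : ℤ, ∑ j ∈ slab q i, (u j) ^ 2)

/-- `J_1(u) = liminf_{p → -∞, q → ∞} ∑_{i=p}^q [J_0(τ^1_{-i} u) - c_0]` -/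
def J1 (s : (Zn n → ℝ) → ℝ) (u : Zn n → ℝ) : ℝ :=
  liminf (fun pq : ℤ × ℤ => ∑ i ∈ Finset.Icc pq.1 pq.2, (Spot s (i • e1v) u - c0 s))
    (atBot ×ˢ atTop)

/-- the class `Γ_1(v_0, w_0)` of heteroclinic configurations from `v_0` to `w_0` -/
def Gamma1 (v0 w0 : Zn n → ℝ) : Set (Zn n → ℝ) :=
  {u | Periodic1 (fun _ => 1) u ∧ v0 ≤ u ∧ u ≤ w0 ∧
    Tendsto (fun i : ℤ => u (i • e1v) - v0 (i • e1v)) atBot (nhds 0) ∧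
    Tendsto (fun i : ℤ => u (i • e1v) - w0 (i • e1v)) atTop (nhds 0)}

/-- `c_1(v_0, w_0) = inf_{Γ_1(v_0,w_0)} J_1` -/
def c1 (s : (Zn n → ℝ) → ℝ) (v0 w0 : Zn n → ℝ) : ℝ :=
  sInf {y | ∃ u ∈ Gamma1 v0 w0, J1 s u = y}

/-- `M_1(v_0, w_0)`, the minimizers of `J_1` on `Γ_1(v_0, w_0)` -/
def M1 (s : (Zn n → ℝ) → ℝ) (v0 w0 : Zn n → ℝ) : Set (Zn n → ℝ) :=
  {u | u ∈ Gamma1 v0 w0 ∧ J1 s u = c1 s v0 w0}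

/-- `I_1^q(u) = liminf_{p → -∞, q' → ∞} ∑_{i=p}^{q'} ∑_{j ∈ {i} × T_1^q} [S_j(u + v_1) - c_0]` -/
def I1q (s : (Zn n → ℝ) → ℝ) (v1 : Zn n → ℝ) (q : Fin n → ℕ) (u : Zn n → ℝ) : ℝ :=
  liminf (fun pq : ℤ × ℤ =>
      ∑ i ∈ Finset.Icc pq.1 pq.2, ∑ j ∈ slab q i, (Spot s j (u + v1) - c0 s))
    (atBot ×ˢ atTop)

/-- the pairing `(I_1^q)'(u) v = ∑_{i ∈ ℤ} ∑_{j ∈ {i} × T_1^q} v(j) ∑_{k : ‖k-j‖ ≤ r} ∂_j S_k(u + v_1)` -/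
def pair1 (r : ℕ) (s : (Zn n → ℝ) → ℝ) (v1 : Zn n → ℝ) (q : Fin n → ℕ)
    (u v : Zn n → ℝ) : ℝ :=
  ∑' i : ℤ, ∑ j ∈ slab q i, v j * grad r s (u + v1) j

/-- `(I_1^q)'(u) = 0` -/
def IsCrit1 (r : ℕ) (s : (Zn n → ℝ) → ℝ) (v1 : Zn n → ℝ) (q : Fin n → ℕ)
    (u : Zn n → ℝ) : Prop :=
  ∀ v, MemLam1 q v → pair1 r s v1 q u v = 0

/-- `G_1^q = {u ∈ Λ_1^q : 0 ≤ u ≤ w_1 - v_1}` -/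
def G1 (q : Fin n → ℕ) (v1 w1 : Zn n → ℝ) : Set (Zn n → ℝ) :=
  {u | MemLam1 q u ∧ 0 ≤ u ∧ u ≤ w1 - v1}

/-- membership in `H_1^q`: a `‖·‖_{Λ_1^q}`-continuous path in `G_1^q` from `0` to `w_1 - v_1` -/
def Path1 (q : Fin n → ℕ) (v1 w1 : Zn n → ℝ) (h : ℝ → Zn n → ℝ) : Prop :=
  (∀ θ ∈ Set.Icc (0 : ℝ) 1, h θ ∈ G1 q v1 w1) ∧ h 0 = 0 ∧ h 1 = w1 - v1 ∧
  ∀ θ ∈ Set.Icc (0 : ℝ) 1, ∀ ε > (0 : ℝ), ∃ δ > (0 : ℝ), ∀ θ' ∈ Set.Icc (0 : ℝ) 1,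
    |θ' - θ| ≤ δ → lamNorm1 q (h θ' - h θ) ≤ ε

/-- the heteroclinic mountain pass level `d_1^q` -/
def d1q (s : (Zn n → ℝ) → ℝ) (v1 w1 : Zn n → ℝ) (q : Fin n → ℕ) : ℝ :=
  sInf {y | ∃ h, Path1 q v1 w1 h ∧
    y = sSup ((fun θ => I1q s v1 q (h θ)) '' Set.Icc 0 1)}

/-- `q(k) = (k, 1, …, 1) ∈ ℕ^{n-1}` (indexed by the directions `e_2, …, e_n`) -/
def qk (n k : ℕ) : Fin n → ℕ := fun m => if (m : ℕ) = 1 then k else 1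


section Statement14Aux

variable {r : ℕ}

lemma natAbs_coord_le (i : Zn n) (m : Fin n) : (i m).natAbs ≤ znorm i :=
  Finset.single_le_sum (f := fun j => (i j).natAbs) (fun _ _ => Nat.zero_le _) (Finset.mem_univ m)

lemma mem_ball_iff {i j : Zn n} : j ∈ ball r i ↔ znorm (j - i) ≤ r := by
  constructor
  · exact fun h => (Finset.mem_filter.1 h).2
  · intro h
    refine Finset.mem_filter.2 ⟨?_, h⟩
    rw [Finset.mem_Icc]
    have key : ∀ m : Fin n, i m - (r : ℤ) ≤ j m ∧ j m ≤ i m + (r : ℤ) := by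
      intro m
      have h1 : ((j - i) m).natAbs ≤ r := le_trans (natAbs_coord_le (j - i) m) h
      have h2 : (j - i) m = j m - i m := rfl
      rw [h2] at h1
      omega
    exact ⟨fun m => (key m).1, fun m => (key m).2⟩

lemma s_eq_sEuc (P : Setup n r) (v : Zn n → ℝ) :
    P.s v = sEuc r P.s (WithLp.toLp 2 (fun b : ball r (0 : Zn n) => v b.1)) := by
  simp only [sEuc]
  apply P.localized
  intro k hk
  have hk' : k ∈ ball r (0 : Zn n) := mem_ball_iff.2 (by simpa using hk)
  simp [hk']

/-- restriction of the shifted configuration to the ball, as a euclidean point -/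
def restr (r : ℕ) (j : Zn n) (w : Zn n → ℝ) : EuclideanSpace ℝ (ball r (0 : Zn n)) :=
  WithLp.toLp 2 fun b => w ((b : Zn n) + j)

/-- direction vector for the partial derivative -/
def dirv (r : ℕ) (i j : Zn n) : EuclideanSpace ℝ (ball r (0 : Zn n)) :=
  WithLp.toLp 2 fun b => if (b : Zn n) + j = i then 1 else 0

lemma spot_update_hasDerivAt (P : Setup n r) (i j : Zn n) (w : Zn n → ℝ) :
    HasDerivAt (fun t => Spot P.s j (Function.update w i t))
      ((fderiv ℝ (sEuc r P.s) (restr r j w)) (dirv r i j)) (w i) := by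
  have hdiff : Differentiable ℝ (sEuc r P.s) := P.smooth.differentiable two_ne_zero
  have hF : HasFDerivAt (sEuc r P.s) (fderiv ℝ (sEuc r P.s) (restr r j w))
      ((fun t : ℝ => restr r j w + (t - w i) • dirv r i j) (w i)) := by
    simpa using (hdiff (restr r j w)).hasFDerivAt
  have hinner : HasDerivAt (fun t : ℝ => restr r j w + (t - w i) • dirv r i j)
      (dirv r i j) (w i) := by
    simpa using
      (((hasDerivAt_id (w i)).sub_const (w i)).smul_const (dirv r i j)).const_add (restr r j w)
  have hcomp := hF.comp_hasDerivAt (w i) hinner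
  have hfun : (fun t : ℝ => Spot P.s j (Function.update w i t))
      = (sEuc r P.s) ∘ (fun t : ℝ => restr r j w + (t - w i) • dirv r i j) := by
    funext t
    show P.s (shift j (Function.update w i t)) = sEuc r P.s _
    rw [s_eq_sEuc P]
    congr 1
    refine PiLp.ext fun b => ?_
    simp only [restr, dirv, PiLp.toLp_apply, PiLp.add_apply, PiLp.smul_apply, smul_eq_mul, shift,
      Function.update_apply]
    by_cases hb : (b : Zn n) + j = i
    · rw [if_pos hb, if_pos hb, hb]
      ring
    · rw [if_neg hb, if_neg hb]
      ring
  rw [hfun]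
  exact hcomp

lemma pd_spot_eq (P : Setup n r) (i j : Zn n) (w : Zn n → ℝ) :
    pd (Spot P.s j) i w = (fderiv ℝ (sEuc r P.s) (restr r j w)) (dirv r i j) :=
  (spot_update_hasDerivAt P i j w).deriv

lemma continuous_restr (r : ℕ) (j : Zn n) : Continuous (restr (n := n) r j) := by
  have h : Continuous fun (w : Zn n → ℝ) (b : {x // x ∈ ball r (0 : Zn n)}) =>
      w ((b : Zn n) + j) := continuous_pi fun b => continuous_apply _
  exact (PiLp.continuous_toLp 2 (fun _ : {x // x ∈ ball r (0 : Zn n)} => ℝ)).comp h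

lemma continuous_grad (P : Setup n r) (i : Zn n) :
    Continuous fun w : Zn n → ℝ => grad r P.s w i := by
  have h1 : (fun w : Zn n → ℝ => grad r P.s w i)
      = fun w => ∑ j ∈ ball r i, (fderiv ℝ (sEuc r P.s) (restr r j w)) (dirv r i j) := by
    funext w
    simp only [grad]
    exact Finset.sum_congr rfl fun j _ => pd_spot_eq P i j w
  rw [h1]
  apply continuous_finset_sum
  intro j _
  exact ((P.smooth.continuous_fderiv two_ne_zero).comp (continuous_restr r j)).clm_apply
    continuous_const

lemma pd_spot_shift (P : Setup n r) (i j a : Zn n) (w : Zn n → ℝ) :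
    pd (Spot P.s j) i (shift a w) = pd (Spot P.s (j + a)) (i + a) w := by
  rw [pd_spot_eq, pd_spot_eq]
  have h1 : restr r j (shift a w) = restr r (j + a) w := by
    simp only [restr]; congr 1; funext b; simp [shift, add_assoc]
  have h2 : dirv (n := n) r i j = dirv r (i + a) (j + a) := by
    simp only [dirv]; congr 1; funext b
    simp only [← add_assoc, add_left_inj]
  rw [h1, h2]

lemma grad_shift (P : Setup n r) (a : Zn n) (w : Zn n → ℝ) (i : Zn n) :
    grad r P.s (shift a w) i = grad r P.s w (i + a) := by
  have himg : ball r (i + a) = Finset.image (fun j => j + a) (ball r i) := by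
    ext j
    simp only [Finset.mem_image, mem_ball_iff]
    constructor
    · intro h
      refine ⟨j - a, ?_, by simp⟩
      have hh : j - a - i = j - (i + a) := by rw [sub_sub, add_comm]
      rw [hh]; exact h
    · rintro ⟨x, hx, rfl⟩
      rwa [add_sub_add_right_eq_sub]
  simp only [grad]
  rw [himg, Finset.sum_image (fun x _ y _ h => by exact add_right_cancel h)]
  exact Finset.sum_congr rfl fun j _ => pd_spot_shift P i j a w

lemma period_step (u : Zn n → ℝ) (m : Fin n) (h : ∀ i, u (i + unitv m) = u i)
    (c : ℤ) (i : Zn n) : u (i + c • unitv m) = u i := by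
  induction c using Int.induction_on generalizing i with
  | zero => simp
  | succ c ih =>
    have h1 : i + ((c : ℤ) + 1) • unitv m = (i + (c : ℤ) • unitv m) + unitv m := by
      rw [add_smul, one_smul, add_assoc]
    rw [h1, h, ih]
  | pred c ih =>
    have h1 : (i + (-(c : ℤ) - 1) • unitv m) + unitv m = i + (-(c : ℤ)) • unitv m := by
      rw [sub_smul, one_smul]; abel
    rw [← h (i + (-(c : ℤ) - 1) • unitv m), h1, ih]

lemma period_reduce (u : Zn n → ℝ) :
    ∀ T : Finset (Fin n), (∀ m ∈ T, ∀ i, u (i + unitv m) = u i) →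
      ∀ i : Zn n, u (i - ∑ m ∈ T, i m • unitv m) = u i := by
  classical
  intro T
  induction T using Finset.induction_on with
  | empty => intro _ i; simp
  | @insert m T hmT ih =>
    intro h i
    rw [Finset.sum_insert hmT]
    have heq : i - (i m • unitv m + ∑ m' ∈ T, i m' • unitv m')
        = (i - ∑ m' ∈ T, i m' • unitv m') + (-(i m)) • unitv m := by
      rw [neg_smul]; abel
    rw [heq, period_step u m (h m (Finset.mem_insert_self m T)) (-(i m))]
    exact ih (fun m' hm' => h m' (Finset.mem_insert_of_mem hm')) i

lemma sum_unitv (i : Zn n) : ∑ m, i m • unitv m = i := by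
  funext m'
  rw [Finset.sum_apply]
  simp only [Pi.smul_apply, unitv, smul_eq_mul, mul_ite, mul_one, mul_zero]
  rw [Finset.sum_ite_eq]
  simp

lemma eq_proj_e1 (u : Zn n → ℝ) (hn : 0 < n)
    (h : ∀ m : Fin n, 1 ≤ (m : ℕ) → ∀ i, u (i + unitv m) = u i) (i : Zn n) :
    u i = u ((i ⟨0, hn⟩) • unitv ⟨0, hn⟩) := by
  classical
  have hT : ∀ m ∈ Finset.univ.erase (⟨0, hn⟩ : Fin n), ∀ x, u (x + unitv m) = u x := by
    intro m hm
    apply h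
    have h1 : m ≠ ⟨0, hn⟩ := Finset.ne_of_mem_erase hm
    have h2 : (m : ℕ) ≠ 0 := fun h0 => h1 (Fin.ext h0)
    omega
  have key := period_reduce u _ hT i
  have heq : i - ∑ m ∈ Finset.univ.erase (⟨0, hn⟩ : Fin n), i m • unitv m
      = (i ⟨0, hn⟩) • unitv ⟨0, hn⟩ := by
    rw [Finset.sum_erase_eq_sub (Finset.mem_univ _), sum_unitv]
    abel
  rw [heq] at key
  exact key.symm

lemma periodicAll_const (u : Zn n → ℝ) (h : PeriodicAll u) (i : Zn n) : u i = u 0 := by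
  have hstep : ∀ m ∈ (Finset.univ : Finset (Fin n)), ∀ j, u (j + unitv m) = u j := by
    intro m _ j
    have h1 := h j m
    simpa using h1
  have key := period_reduce u Finset.univ hstep i
  rw [sum_unitv, sub_self] at key
  exact key.symm

lemma e1v_eq_unitv (hn : 0 < n) : (e1v : Zn n) = unitv ⟨0, hn⟩ := by
  funext m
  simp only [e1v, unitv]
  by_cases hm : (m : ℕ) = 0
  · rw [if_pos hm, if_pos (Fin.ext hm)]
  · rw [if_neg hm, if_neg fun h => hm (by rw [h])]

end Statement14Aux

/-- given solutions `u_k ∈ Λ_0^{p(k)}` (for large `k`) lying in `[0, w_0 - v_0]`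
and intersecting `u₀`, there are shifts `j_k ∈ ℤ` and a subsequence along which the translates
`τ¹_{-j_k} u_k` converge pointwise to some `U` with `0 ≤ U ≤ w_0 - v_0`, `U` `1`-periodic in the
directions `e_2, …, e_n`, `U(0) ≥ u₀(0)`, and `U + v_0` a solution of (EL). -/
theorem statement14 {n r : ℕ} (P : Setup n r) (v0 w0 : Zn n → ℝ)
    (hv0 : v0 ∈ M0 P.s) (hw0 : w0 ∈ M0 P.s) (hlt : ∀ i, v0 i < w0 i)
    (hadj : ∀ u ∈ M0 P.s, u ≠ v0 → u ≠ w0 → ¬(v0 ≤ u ∧ u ≤ w0))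
    (u0 : Zn n → ℝ) (hu0per : PeriodicAll u0)
    (hu0b : ∀ i, 0 < u0 i ∧ u0 i < w0 i - v0 i)
    (hu0sol : IsSolution r P.s (u0 + v0))
    (K : ℕ) (u : ℕ → Zn n → ℝ)
    (hu : ∀ k : ℕ, K ≤ k → Periodic (pk n k) (u k) ∧
      (0 : Zn n → ℝ) ≤ u k ∧ u k ≤ w0 - v0 ∧
      IsSolution r P.s (u k + v0) ∧
      ∃ i j : Zn n, (u k i - u0 i) * (u k j - u0 j) < 0) :
    ∃ (jk : ℕ → ℤ) (φ : ℕ → ℕ) (U : Zn n → ℝ),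
      StrictMono φ ∧ (∀ m, K ≤ φ m) ∧
      (0 : Zn n → ℝ) ≤ U ∧ U ≤ w0 - v0 ∧
      (∀ m : Fin n, 1 ≤ (m : ℕ) → ∀ i : Zn n, U (i + unitv m) = U i) ∧
      u0 0 ≤ U 0 ∧
      IsSolution r P.s (U + v0) ∧
      ∀ i : Zn n, Tendsto (fun m => u (φ m) (i + jk (φ m) • e1v)) atTop (nhds (U i)) := by
  classical
  have hn : 0 < n := P.npos
  have hv0c : ∀ i, v0 i = v0 0 := periodicAll_const v0 hv0.1
  have hw0c : ∀ i, w0 i = w0 0 := periodicAll_const w0 hw0.1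
  have hu0c : ∀ i, u0 i = u0 0 := periodicAll_const u0 hu0per
  set B : ℝ := w0 0 - v0 0 with hB
  have hwvB : ∀ i, (w0 - v0) i = B := fun i => by
    simp only [Pi.sub_apply, hv0c i, hw0c i, hB]
  have hper : ∀ k, K ≤ k → ∀ m : Fin n, 1 ≤ (m : ℕ) → ∀ x, u k (x + unitv m) = u k x := by
    intro k hk m hm x
    have h1 := (hu k hk).1 x m
    have h2 : pk n k m = 1 := by simp [pk, Nat.one_le_iff_ne_zero.mp hm]
    rw [h2] at h1
    simpa using h1
  have hpt : ∀ k, K ≤ k → ∃ z : ℤ, u0 0 < u k (z • e1v) := by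
    intro k hk
    obtain ⟨i, j, hij⟩ := (hu k hk).2.2.2.2
    have hproj : ∀ x : Zn n, u k x = u k ((x ⟨0, hn⟩) • unitv ⟨0, hn⟩) :=
      eq_proj_e1 (u k) hn (hper k hk)
    rcases mul_neg_iff.1 hij with ⟨h1, _⟩ | ⟨_, h2⟩
    · refine ⟨i ⟨0, hn⟩, ?_⟩
      rw [e1v_eq_unitv hn, ← hproj i]
      calc u0 0 = u0 i := (hu0c i).symm
        _ < u k i := by linarith
    · refine ⟨j ⟨0, hn⟩, ?_⟩
      rw [e1v_eq_unitv hn, ← hproj j]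
      calc u0 0 = u0 j := (hu0c j).symm
        _ < u k j := by linarith
  choose jk' hjk' using hpt
  set jk : ℕ → ℤ := fun k => if h : K ≤ k then jk' k h else 0 with hjkdef
  have hjk : ∀ k, ∀ hk : K ≤ k, u0 0 < u k (jk k • e1v) := by
    intro k hk
    simp only [hjkdef, dif_pos hk]
    exact hjk' k hk
  set seq : ℕ → Zn n → ℝ := fun m => shift (jk (m + K) • e1v) (u (m + K)) with hseq
  have hseqval : ∀ m i, seq m i = u (m + K) (i + jk (m + K) • e1v) := fun m i => rfl
  have hmem : ∀ m, seq m ∈ Set.pi Set.univ fun _ : Zn n => Set.Icc (0 : ℝ) B := by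
    intro m
    refine Set.mem_univ_pi.2 fun i => ?_
    have hk : K ≤ m + K := Nat.le_add_left K m
    refine ⟨?_, ?_⟩
    · have h0 := (hu (m + K) hk).2.1 (i + jk (m + K) • e1v)
      rw [hseqval]
      exact h0
    · have h1 := (hu (m + K) hk).2.2.1 (i + jk (m + K) • e1v)
      rw [hwvB] at h1
      rw [hseqval]
      exact h1
  have hScp : IsCompact (Set.pi Set.univ fun _ : Zn n => Set.Icc (0 : ℝ) B) :=
    isCompact_univ_pi fun _ => isCompact_Icc
  obtain ⟨U, hUS, ψ, hψ, hconv⟩ := hScp.tendsto_subseq hmem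
  have hUS' := Set.mem_univ_pi.1 hUS
  have hptconv : ∀ i : Zn n, Tendsto (fun m => seq (ψ m) i) atTop (𝓝 (U i)) := fun i =>
    ((continuous_apply i).tendsto U).comp hconv
  refine ⟨jk, fun m => ψ m + K, U, ?_, ?_, ?_, ?_, ?_, ?_, ?_, ?_⟩
  · intro a b hab
    exact Nat.add_lt_add_right (hψ hab) K
  · intro m
    exact Nat.le_add_left K (ψ m)
  · intro i
    exact (hUS' i).1
  · intro i
    rw [hwvB i]
    exact (hUS' i).2
  · intro m hm i
    have heqseq : (fun m' => seq (ψ m') (i + unitv m)) = fun m' => seq (ψ m') i := by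
      funext m'
      have hk : K ≤ ψ m' + K := Nat.le_add_left _ _
      rw [hseqval, hseqval, add_right_comm]
      exact hper (ψ m' + K) hk m hm _
    have h1 := hptconv (i + unitv m)
    rw [heqseq] at h1
    exact tendsto_nhds_unique h1 (hptconv i)
  · refine ge_of_tendsto' (hptconv 0) fun m' => ?_
    have hk : K ≤ ψ m' + K := Nat.le_add_left _ _
    have h1 := hjk (ψ m' + K) hk
    rw [hseqval, zero_add]
    exact le_of_lt h1
  · intro i
    have hcont : Continuous fun w : Zn n → ℝ => grad r P.s (w + v0) i :=
      (continuous_grad P i).comp (continuous_id.add continuous_const)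
    have htd : Tendsto (fun m' => grad r P.s (seq (ψ m') + v0) i) atTop
        (𝓝 (grad r P.s (U + v0) i)) := (hcont.tendsto U).comp hconv
    have hzero : ∀ m', grad r P.s (seq (ψ m') + v0) i = 0 := by
      intro m'
      have hk : K ≤ ψ m' + K := Nat.le_add_left _ _
      have heq : seq (ψ m') + v0 = shift (jk (ψ m' + K) • e1v) (u (ψ m' + K) + v0) := by
        funext x
        simp only [Pi.add_apply, shift, hseqval]
        rw [hv0c x, hv0c (x + jk (ψ m' + K) • e1v)]
      rw [heq, grad_shift]
      exact (hu (ψ m' + K) hk).2.2.2.1 _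
    have h0 : Tendsto (fun m' => grad r P.s (seq (ψ m') + v0) i) atTop (𝓝 0) := by
      simp only [hzero]
      exact tendsto_const_nhds
    exact tendsto_nhds_unique htd h0
  · intro i
    have h1 := hptconv i
    simp only [hseqval] at h1
    exact h1

end

end FK
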